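/- For every standard polynomial bound: there is a constant C such that for all k ≥ C, if m = k^{4⌈log₂ k⌉} and f : [m]² → 2 is at most k-unstable, then there is a subset A ⊆ [m] with |A| = 2^{2⌈log₂ k⌉} ≥ k² on which f restricts to a very simple colouring; consequently f has a homogeneous set of size at least k. -/

import Mathlib

/-- Number of indices where consecutive entries of a boolean sequence differ. -/
def changes (s : List Bool) : ℕ :=
  ((s.zip s.tail).filter fun p => p.1 != p.2).length

/-- Number of maximal constant blocks of a boolean sequence. -/
def blocks (s : List Bool) : ℕ :=
  if s = [] then 0 else changes s + 1

/-- The sequence ⟨f x y : y ∈ A, y > x⟩ in increasing order of y. -/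
def seqAfter (f : ℕ → ℕ → Bool) (A : Finset ℕ) (x : ℕ) : List Bool :=
  (Finset.sort (A.filter fun y => x < y) (· ≤ ·)).map (f x)

/-- `f` is at most `k`-unstable on `A`: each sequence f(x,−) has at most k maximal constant blocks. -/
def AtMostUnstable (f : ℕ → ℕ → Bool) (A : Finset ℕ) (k : ℕ) : Prop :=
  ∀ x ∈ A, blocks (seqAfter f A x) ≤ k

/-- `H` is homogeneous for `f` with colour `b`. -/
def HomogOf (f : ℕ → ℕ → Bool) (H : Finset ℕ) (b : Bool) : Prop :=
  ∀ x ∈ H, ∀ y ∈ H, x < y → f x y = b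

/-- `H` is homogeneous for `f`. -/
def Homogeneous (f : ℕ → ℕ → Bool) (H : Finset ℕ) : Prop :=
  ∃ b, HomogOf f H b

/-- Very simple colourings (Erdős–Hajnal), as a predicate on (finite set, colouring). -/
inductive VerySimple : Finset ℕ → (ℕ → ℕ → Bool) → Prop
  | single (a : ℕ) (f : ℕ → ℕ → Bool) : VerySimple {a} f
  | join (S₁ S₂ : Finset ℕ) (f : ℕ → ℕ → Bool) (b : Bool)
      (hd : Disjoint S₁ S₂)
      (h₁ : VerySimple S₁ f) (h₂ : VerySimple S₂ f)
      (hcross : ∀ x ∈ S₁, ∀ y ∈ S₂, (x < y → f x y = b) ∧ (y < x → f y x = b)) :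
      VerySimple (S₁ ∪ S₂) f

/-- The list `s` contains a run of `k+1` equal consecutive entries. -/
def hasRunL (k : ℕ) (s : List Bool) : Prop :=
  ∃ i, i + k < s.length ∧
    ∀ a b, i ≤ a → a ≤ i + k → i ≤ b → b ≤ i + k → s.getD a false = s.getD b false

/-- The least level `e ≤ t` at which `x` and `y` lie in the same interval of length `s^e`. -/
def splitLevel (s t x y : ℕ) : ℕ :=
  (((List.range (t + 1)).find? fun e => x / s ^ e == y / s ^ e).getD t)

/-- The hierarchical colouring of `[s^t]` built from a base colouring `g` on `[s]`. -/
def hierColor (s t : ℕ) (g : ℕ → ℕ → Bool) (x y : ℕ) : Bool :=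
  g ((x / s ^ (splitLevel s t x y - 1)) % s) ((y / s ^ (splitLevel s t x y - 1)) % s)

@[simp] lemma changes_nil : changes [] = 0 := rfl
@[simp] lemma changes_single (a : Bool) : changes [a] = 0 := rfl

lemma changes_cons_cons (a b : Bool) (l : List Bool) :
    changes (a :: b :: l) = (if a = b then 0 else 1) + changes (b :: l) := by
  simp only [changes, List.tail_cons, List.zip_cons_cons, List.filter_cons]
  by_cases h : a = b <;> simp [h, List.length_cons, Nat.add_comm]

lemma changes_cons_le (a : Bool) (l : List Bool) : changes (a :: l) ≤ 1 + changes l := by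
  cases l with
  | nil => simp
  | cons b t => rw [changes_cons_cons]; split <;> omega

lemma le_changes_cons (a : Bool) (l : List Bool) : changes l ≤ changes (a :: l) := by
  cases l with
  | nil => simp
  | cons b t => rw [changes_cons_cons]; omega

lemma changes_sublist' : ∀ {l₁ l₂ : List Bool}, List.Sublist l₁ l₂ →
    changes l₁ ≤ changes l₂ ∧ ∀ a, changes (a :: l₁) ≤ changes (a :: l₂) := by
  intro l₁ l₂ h
  induction h with
  | slnil => exact ⟨le_refl _, fun a => le_refl _⟩
  | @cons l₁ l₂ b _ ih =>
      refine ⟨ih.1.trans (le_changes_cons b l₂), fun a => ?_⟩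
      by_cases hab : a = b
      · subst hab
        refine (ih.2 a).trans (le_of_eq ?_)
        rw [changes_cons_cons]; simp
      · calc changes (a :: l₁) ≤ 1 + changes l₁ := changes_cons_le a l₁
          _ ≤ 1 + changes l₂ := Nat.add_le_add_left ih.1 1
          _ ≤ changes (a :: b :: l₂) := by
              rw [changes_cons_cons]
              simp only [hab, if_false]
              exact Nat.add_le_add_left (le_changes_cons b l₂) 1
  | @cons_cons l₁ l₂ a _ ih =>
      refine ⟨ih.2 a, fun c => ?_⟩
      rw [changes_cons_cons, changes_cons_cons]
      exact Nat.add_le_add_left (ih.2 a) _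

lemma changes_sublist {l₁ l₂ : List Bool} (h : List.Sublist l₁ l₂) :
    changes l₁ ≤ changes l₂ := (changes_sublist' h).1

lemma changes_append (l₁ l₂ : List Bool) :
    changes l₁ + changes l₂ ≤ changes (l₁ ++ l₂) := by
  induction l₁ with
  | nil => simp
  | cons a t ih =>
      cases t with
      | nil =>
          simp only [changes_single, List.singleton_append, Nat.zero_add]
          exact (le_changes_cons a l₂)
      | cons b u =>
          have h1 : changes (b :: u) + changes l₂ ≤ changes (b :: u ++ l₂) := ih
          rw [List.cons_append, changes_cons_cons]
          rw [show (b :: u) ++ l₂ = b :: (u ++ l₂) from rfl] at h1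
          rw [show a :: (b :: u ++ l₂) = a :: b :: (u ++ l₂) from rfl,
            changes_cons_cons]
          omega

lemma changes_eq_zero {l : List Bool} (h : changes l = 0) :
    ∀ a ∈ l, ∀ b ∈ l, a = b := by
  induction l with
  | nil => simp
  | cons x t ih =>
      cases t with
      | nil => simp
      | cons y u =>
          rw [changes_cons_cons] at h
          have hxy : x = y := by by_contra hne; simp [hne] at h
          have h2 : changes (y :: u) = 0 := by omega
          intro a ha b hb
          have key : ∀ c ∈ x :: y :: u, c = y := by
            intro c hc
            rcases List.mem_cons.1 hc with rfl | hc
            · exact hxy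
            · exact ih h2 c hc y List.mem_cons_self
          rw [key a ha, key b hb]

lemma one_le_changes {l : List Bool} {a b : Bool} (ha : a ∈ l) (hb : b ∈ l) (hne : a ≠ b) :
    1 ≤ changes l := by
  by_contra h
  exact hne (changes_eq_zero (by omega) a ha b hb)

/-- nonconstant pieces of a flattened list are at most the number of changes -/
lemma countP_le_changes_flatten (L : List (List Bool)) :
    (L.countP fun u => u.any id && u.any (! ·)) ≤ changes L.flatten := by
  induction L with
  | nil => simp
  | cons u T ih =>
      rw [List.countP_cons, List.flatten_cons]
      have h2 := changes_append u T.flatten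
      by_cases hu : (u.any id && u.any (! ·)) = true
      · simp only [hu, if_true]
        obtain ⟨x, hx, hxt⟩ := List.any_eq_true.1 ((Bool.and_eq_true _ _ ▸ hu : _ ∧ _)).1
        obtain ⟨y, hy, hyt⟩ := List.any_eq_true.1 ((Bool.and_eq_true _ _ ▸ hu : _ ∧ _)).2
        have hne : x ≠ y := by
          simp only [id] at hxt; cases x <;> cases y <;> simp_all
        have := one_le_changes hx hy hne
        omega
      · simp only [hu, if_neg]; simp only [Bool.not_eq_true] at hu; simp [hu]
        omega

lemma sorted_sublist_sort {l : List ℕ} {s : Finset ℕ} (hs : l.Pairwise (· < ·))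
    (hsub : ∀ y ∈ l, y ∈ s) : List.Sublist l (Finset.sort s (· ≤ ·)) := by
  apply List.sublist_of_subperm_of_pairwise (r := (· < ·))
  · exact List.Nodup.subperm hs.nodup (fun y hy => (Finset.mem_sort (· ≤ ·)).2 (hsub y hy))
  · exact hs
  · exact (Finset.sortedLT_sort s).pairwise


lemma lemX (f : ℕ → ℕ → Bool) (m k x : ℕ)
    (hch : changes (seqAfter f (Finset.range m) x) ≤ k) (P : List (Finset ℕ))
    (hmem : ∀ Q ∈ P, ∀ y ∈ Q, x < y ∧ y < m)
    (hsep : P.Pairwise fun Q R => ∀ a ∈ Q, ∀ b ∈ R, a < b) :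
    (P.countP fun Q => !decide (∀ y ∈ Q, ∀ z ∈ Q, f x y = f x z)) ≤ k := by
  classical
  set g : Finset ℕ → List Bool := fun Q => (Finset.sort Q (· ≤ ·)).map (f x) with hg
  have step1 : (P.countP fun Q => !decide (∀ y ∈ Q, ∀ z ∈ Q, f x y = f x z))
      ≤ ((P.map g).countP fun u => u.any id && u.any (! ·)) := by
    rw [List.countP_map]
    apply List.countP_mono_left
    intro Q hQ hpQ
    simp only [Bool.not_eq_true', decide_eq_false_iff_not] at hpQ
    push_neg at hpQ
    obtain ⟨y, hy, z, hz, hne⟩ := hpQ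
    have hyg : f x y ∈ g Q := List.mem_map_of_mem ((Finset.mem_sort _).2 hy)
    have hzg : f x z ∈ g Q := List.mem_map_of_mem ((Finset.mem_sort _).2 hz)
    have hne' : (f x y = true ∧ f x z = false) ∨ (f x y = false ∧ f x z = true) := by
      cases hfy : f x y <;> cases hfz : f x z <;> simp_all
    have key : true ∈ g Q ∧ false ∈ g Q := by
      rcases hne' with ⟨h1, h2⟩ | ⟨h1, h2⟩
      · exact ⟨h1 ▸ hyg, h2 ▸ hzg⟩
      · exact ⟨h2 ▸ hzg, h1 ▸ hyg⟩
    simp only [Function.comp_apply, Bool.and_eq_true, List.any_eq_true]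
    exact ⟨⟨true, key.1, rfl⟩, ⟨false, key.2, rfl⟩⟩
  have step2 : (P.map g).flatten = List.map (f x) (P.map (fun Q => Finset.sort Q (· ≤ ·))).flatten := by
    rw [List.map_flatten, List.map_map]; rfl
  have hsorted : (P.map (fun Q => Finset.sort Q (· ≤ ·))).flatten.Pairwise (· < ·) := by
    rw [List.pairwise_flatten]
    constructor
    · intro l hl
      obtain ⟨Q, _, rfl⟩ := List.mem_map.1 hl
      exact (Finset.sortedLT_sort Q).pairwise
    · rw [List.pairwise_map]
      refine hsep.imp_of_mem ?_
      intro Q R hQ hR h a ha b hb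
      exact h a ((Finset.mem_sort _).1 ha) b ((Finset.mem_sort _).1 hb)
  have hsubl : List.Sublist (P.map (fun Q => Finset.sort Q (· ≤ ·))).flatten
      (Finset.sort ((Finset.range m).filter fun y => x < y) (· ≤ ·)) := by
    apply sorted_sublist_sort hsorted
    intro y hy
    rw [List.mem_flatten] at hy
    obtain ⟨l, hl, hyl⟩ := hy
    obtain ⟨Q, hQ, rfl⟩ := List.mem_map.1 hl
    have := hmem Q hQ y ((Finset.mem_sort _).1 hyl)
    simp only [Finset.mem_filter, Finset.mem_range]
    exact ⟨this.2, this.1⟩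
  calc (P.countP fun Q => !decide (∀ y ∈ Q, ∀ z ∈ Q, f x y = f x z))
      ≤ ((P.map g).countP fun u => u.any id && u.any (! ·)) := step1
    _ ≤ changes (P.map g).flatten := countP_le_changes_flatten _
    _ = changes (List.map (f x) (P.map (fun Q => Finset.sort Q (· ≤ ·))).flatten) := by rw [step2]
    _ ≤ changes (seqAfter f (Finset.range m) x) := changes_sublist (List.Sublist.map _ hsubl)
    _ ≤ k := hch

lemma countP_range (n : ℕ) (p : ℕ → Prop) [DecidablePred p] :
    ((Finset.range n).filter p).card = (List.range n).countP (fun a => decide (p a)) := by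
  induction n with
  | zero => simp
  | succ n ih =>
      rw [Finset.range_add_one, List.range_succ, List.countP_append, Finset.filter_insert]
      by_cases h : p n
      · rw [if_pos h, Finset.card_insert_of_notMem (by simp), ih]; simp [h]
      · rw [if_neg h, ih]; simp [h]

lemma step (f : ℕ → ℕ → Bool) (m k q : ℕ) (hk : 1 ≤ k)
    (hU : ∀ x < m, changes (seqAfter f (Finset.range m) x) + 1 ≤ k)
    (B : Finset ℕ) (hBm : B ⊆ Finset.range m) (hq : 1 ≤ q) (hcard : 16 * k * q ≤ B.card) :
    ∃ (B₁ B₂ : Finset ℕ) (b : Bool), B₁ ⊆ B ∧ B₂ ⊆ B ∧ q ≤ B₁.card ∧ q ≤ B₂.card ∧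
      ∀ x ∈ B₁, ∀ y ∈ B₂, x < y ∧ f x y = b := by
  classical
  set lB := Finset.sort B (· ≤ ·) with hlB
  have hlen : lB.length = B.card := Finset.length_sort _
  have hsortB : lB.Pairwise (· < ·) := (Finset.sortedLT_sort B).pairwise
  have hmemB : ∀ y ∈ lB, y ∈ B := fun y hy => (Finset.mem_sort _).1 hy
  set Cl := lB.take (8 * k * q) with hCl
  set Rl := lB.drop (8 * k * q) with hRl
  set Dl := Rl.take (8 * k * q) with hDl
  have h16 : 16 * k * q = 2 * (8 * k * q) := by ring
  have hCllen : Cl.length = 8 * k * q := by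
    rw [hCl, List.length_take, hlen]; omega
  have hDllen : Dl.length = 8 * k * q := by
    rw [hDl, List.length_take, hRl, List.length_drop, hlen]; omega
  have hClsub : Cl.Sublist lB := List.take_sublist _ _
  have hDlsub : Dl.Sublist lB := (List.take_sublist _ _).trans (List.drop_sublist _ _)
  have hCltoB : ∀ y ∈ Cl, y ∈ B := fun y hy => hmemB y (hClsub.subset hy)
  have hDltoB : ∀ y ∈ Dl, y ∈ B := fun y hy => hmemB y (hDlsub.subset hy)
  have hCD : ∀ x ∈ Cl, ∀ y ∈ Rl, x < y := by
    have := (List.pairwise_append.1 (by rw [List.take_append_drop (8*k*q) lB]; exact hsortB)).2.2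
    exact this
  -- chunks
  set chunkl : ℕ → List ℕ := fun j => (Dl.drop (4 * q * j)).take (4 * q) with hchunkl
  set chunk : ℕ → Finset ℕ := fun j => (chunkl j).toFinset with hchunk
  have hchunksubDl : ∀ j, (chunkl j).Sublist Dl :=
    fun j => (List.take_sublist _ _).trans (List.drop_sublist _ _)
  have hchunklen : ∀ j < 2 * k, (chunkl j).length = 4 * q := by
    intro j hj
    rw [hchunkl]
    simp only [List.length_take, List.length_drop, hDllen]
    have : 4 * q * j + 4 * q ≤ 8 * k * q := by nlinarith
    omega
  have hchunknodup : ∀ j, (chunkl j).Nodup :=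
    fun j => ((hchunksubDl j).trans hDlsub).nodup (Finset.sort_nodup _ _)
  have hchunkcard : ∀ j < 2 * k, (chunk j).card = 4 * q := by
    intro j hj
    rw [hchunk]; rw [List.toFinset_card_of_nodup (hchunknodup j), hchunklen j hj]
  have hchunkmemB : ∀ j, ∀ y ∈ chunk j, y ∈ B := by
    intro j y hy
    exact hDltoB y ((hchunksubDl j).subset (List.mem_toFinset.1 hy))
  have hchunkmemDl : ∀ j, ∀ y ∈ chunk j, y ∈ Dl := by
    intro j y hy
    exact (hchunksubDl j).subset (List.mem_toFinset.1 hy)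
  have hsortDl : Dl.Pairwise (· < ·) := hsortB.sublist hDlsub
  have hchunksep : ∀ {i j}, i < j → ∀ a ∈ chunk i, ∀ b ∈ chunk j, a < b := by
    intro i j hij a ha b hb
    set E := Dl.drop (4 * q * i) with hE
    have hsortE : E.Pairwise (· < ·) := hsortDl.sublist (List.drop_sublist _ _)
    have hpair := (List.pairwise_append.1
      (by rw [List.take_append_drop (4*q) E]; exact hsortE)).2.2
    have haE : a ∈ E.take (4 * q) := List.mem_toFinset.1 ha
    have hbE : b ∈ E.drop (4 * q) := by
      have hbl : b ∈ chunkl j := List.mem_toFinset.1 hb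
      have hsub2 : (chunkl j).Sublist (Dl.drop (4 * q * i + 4 * q)) := by
        have h1 : 4 * q * i + 4 * q ≤ 4 * q * j := by nlinarith
        have heq : Dl.drop (4 * q * j)
            = (Dl.drop (4 * q * i + 4 * q)).drop (4 * q * j - (4 * q * i + 4 * q)) := by
          rw [List.drop_drop]; congr 1; omega
        show (List.take (4 * q) (Dl.drop (4 * q * j))).Sublist _
        rw [heq]
        exact (List.take_sublist _ _).trans (List.drop_sublist _ _)
      have hEeq : E.drop (4 * q) = Dl.drop (4 * q * i + 4 * q) := by
        rw [hE, List.drop_drop]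
      rw [hEeq]
      exact hsub2.subset hbl
    exact hpair a haE b hbE
  -- constancy predicate
  set cst : ℕ → ℕ → Prop := fun x j => ∀ y ∈ chunk j, ∀ z ∈ chunk j, f x y = f x z with hcst
  -- per-x counting
  have hperx : ∀ x ∈ Cl, k + 1 ≤ ((Finset.range (2 * k)).filter fun j => cst x j).card := by
    intro x hx
    have hxB : x ∈ B := hCltoB x hx
    have hxm : x < m := Finset.mem_range.1 (hBm hxB)
    have hbad : (((List.range (2 * k)).map chunk).countP
        fun Q => !decide (∀ y ∈ Q, ∀ z ∈ Q, f x y = f x z)) ≤ k - 1 := by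
      apply lemX f m (k - 1) x
      · have := hU x hxm; omega
      · intro Q hQ y hy
        obtain ⟨j, _, rfl⟩ := List.mem_map.1 hQ
        constructor
        · exact hCD x hx y (by
            have : y ∈ Dl := hchunkmemDl j y hy
            exact (List.take_sublist _ _).subset this)
        · exact Finset.mem_range.1 (hBm (hchunkmemB j y hy))
      · rw [List.pairwise_map]
        refine (List.pairwise_lt_range (n := 2 * k)).imp_of_mem ?_
        intro i j _ _ hij
        exact hchunksep hij
    have hbad2 : (((Finset.range (2 * k)).filter fun j => ¬ cst x j).card) ≤ k - 1 := by
      rw [countP_range]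
      rw [List.countP_map] at hbad
      refine le_trans (le_of_eq ?_) hbad
      apply List.countP_congr
      intro j _
      simp [hcst]
    have htotal := Finset.card_filter_add_card_filter_not (s := Finset.range (2*k))
      (fun j => cst x j)
    rw [Finset.card_range] at htotal
    omega
  -- double counting
  have hdouble : ∑ j ∈ Finset.range (2 * k), (Cl.toFinset.filter fun x => cst x j).card
      ≥ 8 * k * q * (k + 1) := by
    have hClnodup : Cl.Nodup := hClsub.nodup (Finset.sort_nodup _ _)
    have h1 : ∀ x ∈ Cl.toFinset, k + 1 ≤ ((Finset.range (2 * k)).filter fun j => cst x j).card :=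
      fun x hx => hperx x (List.mem_toFinset.1 hx)
    calc ∑ j ∈ Finset.range (2 * k), (Cl.toFinset.filter fun x => cst x j).card
        = ∑ x ∈ Cl.toFinset, ((Finset.range (2 * k)).filter fun j => cst x j).card := by
          simp_rw [Finset.card_filter]
          rw [Finset.sum_comm]
      _ ≥ ∑ _x ∈ Cl.toFinset, (k + 1) := Finset.sum_le_sum h1
      _ = Cl.toFinset.card * (k + 1) := by rw [Finset.sum_const, smul_eq_mul]
      _ = 8 * k * q * (k + 1) := by
          rw [List.toFinset_card_of_nodup hClnodup, hCllen]
  have hpigeon : ∃ j ∈ Finset.range (2 * k), 4 * q * (k + 1)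
      ≤ (Cl.toFinset.filter fun x => cst x j).card := by
    apply Finset.exists_le_of_sum_le (f := fun _ => 4 * q * (k + 1))
    · exact ⟨0, Finset.mem_range.2 (by omega)⟩
    · rw [Finset.sum_const, Finset.card_range, smul_eq_mul]
      calc 2 * k * (4 * q * (k + 1)) = 8 * k * q * (k + 1) := by ring
        _ ≤ _ := hdouble
  obtain ⟨j₀, hj₀mem, hj₀⟩ := hpigeon
  have hj₀lt : j₀ < 2 * k := Finset.mem_range.1 hj₀mem
  set C' := Cl.toFinset.filter fun x => cst x j₀ with hC'
  -- chunk j₀ nonempty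
  have hchunkne : (chunk j₀).Nonempty := by
    rw [← Finset.card_pos, hchunkcard j₀ hj₀lt]; omega
  obtain ⟨y₀, hy₀⟩ := hchunkne
  -- majority colour
  have hsplit : (C'.filter fun x => f x y₀ = true).card
      + (C'.filter fun x => ¬ (f x y₀ = true)).card = C'.card :=
    Finset.card_filter_add_card_filter_not _
  have hmaj : ∃ b : Bool, q ≤ (C'.filter fun x => f x y₀ = b).card := by
    by_cases hb : q ≤ (C'.filter fun x => f x y₀ = true).card
    · exact ⟨true, hb⟩
    · refine ⟨false, ?_⟩
      have h2 : (C'.filter fun x => ¬ (f x y₀ = true)) = (C'.filter fun x => f x y₀ = false) := by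
        apply Finset.filter_congr; intro x _; simp
      have h3 : 4 * q * (k + 1) ≤ C'.card := hj₀
      have hq2 : q ≤ 4 * q * (k + 1) := by nlinarith
      have hq3 : 2 * q ≤ 4 * q * (k + 1) := by nlinarith
      rw [← h2]
      omega
  obtain ⟨b, hbcard⟩ := hmaj
  refine ⟨C'.filter fun x => f x y₀ = b, chunk j₀, b, ?_, ?_, hbcard, ?_, ?_⟩
  · intro x hx
    have : x ∈ C' := Finset.mem_of_mem_filter _ hx
    exact hCltoB x (List.mem_toFinset.1 (Finset.mem_of_mem_filter _ this))
  · exact hchunkmemB j₀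
  · rw [hchunkcard j₀ hj₀lt]; omega
  · intro x hx y hy
    have hxC' : x ∈ C' := Finset.mem_of_mem_filter _ hx
    have hxCl : x ∈ Cl := List.mem_toFinset.1 (Finset.mem_of_mem_filter _ hxC')
    have hxcst : cst x j₀ := (Finset.mem_filter.1 hxC').2
    have hfb : f x y₀ = b := (Finset.mem_filter.1 hx).2
    refine ⟨?_, ?_⟩
    · exact hCD x hxCl y ((List.take_sublist _ _).subset (hchunkmemDl j₀ y hy))
    · rw [← hfb]; exact hxcst y hy y₀ hy₀

lemma buildVS (f : ℕ → ℕ → Bool) (m k : ℕ) (hk : 1 ≤ k)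
    (hU : ∀ x < m, changes (seqAfter f (Finset.range m) x) + 1 ≤ k) :
    ∀ d (B : Finset ℕ), B ⊆ Finset.range m → (16 * k) ^ d ≤ B.card →
      ∃ A, A ⊆ B ∧ A.card = 2 ^ d ∧ VerySimple A f := by
  intro d
  induction d with
  | zero =>
      intro B _ hcard
      simp only [pow_zero] at hcard
      obtain ⟨a, ha⟩ := Finset.card_pos.1 hcard
      exact ⟨{a}, Finset.singleton_subset_iff.2 ha, Finset.card_singleton a,
        VerySimple.single a f⟩
  | succ d ih =>
      intro B hBm hcard
      have hq : 1 ≤ (16 * k) ^ d := Nat.one_le_pow _ _ (by omega)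
      have hstep := step f m k ((16 * k) ^ d) hk hU B hBm hq
        (by rw [pow_succ] at hcard; calc 16 * k * (16 * k) ^ d = (16*k)^d * (16*k) := by ring
              _ ≤ B.card := hcard)
      obtain ⟨B₁, B₂, b, hB₁, hB₂, hc₁, hc₂, hcross⟩ := hstep
      obtain ⟨A₁, hA₁sub, hA₁card, hA₁vs⟩ := ih B₁ (hB₁.trans hBm) hc₁
      obtain ⟨A₂, hA₂sub, hA₂card, hA₂vs⟩ := ih B₂ (hB₂.trans hBm) hc₂
      have hlt : ∀ x ∈ A₁, ∀ y ∈ A₂, x < y ∧ f x y = b :=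
        fun x hx y hy => hcross x (hA₁sub hx) y (hA₂sub hy)
      have hdisj : Disjoint A₁ A₂ := by
        rw [Finset.disjoint_left]
        intro a ha₁ ha₂
        exact lt_irrefl a (hlt a ha₁ a ha₂).1
      refine ⟨A₁ ∪ A₂, Finset.union_subset (hA₁sub.trans hB₁) (hA₂sub.trans hB₂), ?_, ?_⟩
      · rw [Finset.card_union_of_disjoint hdisj, hA₁card, hA₂card, pow_succ]; ring
      · exact VerySimple.join A₁ A₂ f b hdisj hA₁vs hA₂vs
          (fun x hx y hy => ⟨fun _ => (hlt x hx y hy).2,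
            fun hyx => absurd (hlt x hx y hy).1 (by omega)⟩)

lemma homog_union {f : ℕ → ℕ → Bool} {S₁ S₂ H₁ H₂ : Finset ℕ} {b : Bool}
    (hH₁ : H₁ ⊆ S₁) (hH₂ : H₂ ⊆ S₂) (h1 : HomogOf f H₁ b) (h2 : HomogOf f H₂ b)
    (hcross : ∀ x ∈ S₁, ∀ y ∈ S₂, (x < y → f x y = b) ∧ (y < x → f y x = b)) :
    HomogOf f (H₁ ∪ H₂) b := by
  intro x hx y hy hxy
  rcases Finset.mem_union.1 hx with hx1 | hx2 <;> rcases Finset.mem_union.1 hy with hy1 | hy2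
  · exact h1 x hx1 y hy1 hxy
  · exact (hcross x (hH₁ hx1) y (hH₂ hy2)).1 hxy
  · exact (hcross y (hH₁ hy1) x (hH₂ hx2)).2 hxy
  · exact h2 x hx2 y hy2 hxy

lemma vs_hom : ∀ {A : Finset ℕ} {f : ℕ → ℕ → Bool}, VerySimple A f →
    ∃ H₀ H₁ : Finset ℕ, H₀ ⊆ A ∧ H₁ ⊆ A ∧ HomogOf f H₀ false ∧ HomogOf f H₁ true ∧
      A.card ≤ H₀.card * H₁.card := by
  intro A f h
  induction h with
  | single a f =>
      refine ⟨{a}, {a}, le_refl _, le_refl _, ?_, ?_, by simp⟩ <;>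
      · intro x hx y hy hxy
        rw [Finset.mem_singleton] at hx hy
        omega
  | join S₁ S₂ f b hd h1 h2 hcross ih1 ih2 =>
      obtain ⟨P₀, P₁, hP₀s, hP₁s, hP₀, hP₁, hPcard⟩ := ih1
      obtain ⟨Q₀, Q₁, hQ₀s, hQ₁s, hQ₀, hQ₁, hQcard⟩ := ih2
      have hcardle : (S₁ ∪ S₂).card ≤ S₁.card + S₂.card := Finset.card_union_le _ _
      cases b with
      | true =>
          have hdisj : Disjoint P₁ Q₁ := hd.mono hP₁s hQ₁s
          have hucard : (P₁ ∪ Q₁).card = P₁.card + Q₁.card := Finset.card_union_of_disjoint hdisj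
          have hhom : HomogOf f (P₁ ∪ Q₁) true := homog_union hP₁s hQ₁s hP₁ hQ₁ hcross
          by_cases hbig : Q₀.card ≤ P₀.card
          · refine ⟨P₀, P₁ ∪ Q₁, hP₀s.trans Finset.subset_union_left,
              Finset.union_subset (hP₁s.trans Finset.subset_union_left)
                (hQ₁s.trans Finset.subset_union_right), hP₀, hhom, ?_⟩
            rw [hucard]
            calc (S₁ ∪ S₂).card ≤ S₁.card + S₂.card := hcardle
              _ ≤ P₀.card * P₁.card + Q₀.card * Q₁.card := by omega
              _ ≤ P₀.card * P₁.card + P₀.card * Q₁.card := by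
                  exact Nat.add_le_add_left (Nat.mul_le_mul_right _ hbig) _
              _ = P₀.card * (P₁.card + Q₁.card) := by ring
          · refine ⟨Q₀, P₁ ∪ Q₁, hQ₀s.trans Finset.subset_union_right,
              Finset.union_subset (hP₁s.trans Finset.subset_union_left)
                (hQ₁s.trans Finset.subset_union_right), hQ₀, hhom, ?_⟩
            rw [hucard]
            calc (S₁ ∪ S₂).card ≤ S₁.card + S₂.card := hcardle
              _ ≤ P₀.card * P₁.card + Q₀.card * Q₁.card := by omega
              _ ≤ Q₀.card * P₁.card + Q₀.card * Q₁.card := by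
                  exact Nat.add_le_add_right (Nat.mul_le_mul_right _ (by omega)) _
              _ = Q₀.card * (P₁.card + Q₁.card) := by ring
      | false =>
          have hdisj : Disjoint P₀ Q₀ := hd.mono hP₀s hQ₀s
          have hucard : (P₀ ∪ Q₀).card = P₀.card + Q₀.card := Finset.card_union_of_disjoint hdisj
          have hhom : HomogOf f (P₀ ∪ Q₀) false := homog_union hP₀s hQ₀s hP₀ hQ₀ hcross
          by_cases hbig : Q₁.card ≤ P₁.card
          · refine ⟨P₀ ∪ Q₀, P₁,
              Finset.union_subset (hP₀s.trans Finset.subset_union_left)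
                (hQ₀s.trans Finset.subset_union_right),
              hP₁s.trans Finset.subset_union_left, hhom, hP₁, ?_⟩
            rw [hucard]
            calc (S₁ ∪ S₂).card ≤ S₁.card + S₂.card := hcardle
              _ ≤ P₀.card * P₁.card + Q₀.card * Q₁.card := by omega
              _ ≤ P₀.card * P₁.card + Q₀.card * P₁.card := by
                  exact Nat.add_le_add_left (Nat.mul_le_mul_left _ hbig) _
              _ = (P₀.card + Q₀.card) * P₁.card := by ring
          · refine ⟨P₀ ∪ Q₀, Q₁,
              Finset.union_subset (hP₀s.trans Finset.subset_union_left)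
                (hQ₀s.trans Finset.subset_union_right),
              hQ₁s.trans Finset.subset_union_right, hhom, hQ₁, ?_⟩
            rw [hucard]
            calc (S₁ ∪ S₂).card ≤ S₁.card + S₂.card := hcardle
              _ ≤ P₀.card * P₁.card + Q₀.card * Q₁.card := by omega
              _ ≤ P₀.card * Q₁.card + Q₀.card * Q₁.card := by
                  exact Nat.add_le_add_right (Nat.mul_le_mul_left _ (by omega)) _
              _ = (P₀.card + Q₀.card) * Q₁.card := by ring

theorem stmt17 : ∃ C : ℕ, ∀ k : ℕ, C ≤ k →
    ∀ f : ℕ → ℕ → Bool,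
      AtMostUnstable f (Finset.range (k ^ (4 * Nat.clog 2 k))) k →
      ∃ A ⊆ Finset.range (k ^ (4 * Nat.clog 2 k)),
        A.card = 2 ^ (2 * Nat.clog 2 k) ∧ k ^ 2 ≤ A.card ∧ VerySimple A f ∧
        ∃ H ⊆ Finset.range (k ^ (4 * Nat.clog 2 k)),
          Homogeneous f H ∧ k ≤ H.card := by
  refine ⟨16, fun k hk f hAM => ?_⟩
  set L := Nat.clog 2 k with hL
  set m := k ^ (4 * L) with hm
  have hk1 : 1 ≤ k := by omega
  have hU : ∀ x < m, changes (seqAfter f (Finset.range m) x) + 1 ≤ k := by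
    intro x hxm
    have hb := hAM x (Finset.mem_range.2 hxm)
    by_cases hs : seqAfter f (Finset.range m) x = []
    · rw [hs]; simp only [changes_nil]; omega
    · rw [blocks, if_neg hs] at hb; exact hb
  have hkle : k ≤ 2 ^ L := Nat.le_pow_clog (by norm_num) k
  have hpow : (16 * k) ^ (2 * L) ≤ m := by
    calc (16 * k) ^ (2 * L) ≤ (k * k) ^ (2 * L) :=
          Nat.pow_le_pow_left (by nlinarith) _
      _ = k ^ (4 * L) := by
          rw [← pow_two, ← pow_mul]; congr 1; ring
  obtain ⟨A, hAsub, hAcard, hAvs⟩ := buildVS f m k hk1 hU (2 * L) (Finset.range m)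
    (le_refl _) (by rw [Finset.card_range]; exact hpow)
  have hk2 : k ^ 2 ≤ A.card := by
    rw [hAcard]
    calc k ^ 2 ≤ (2 ^ L) ^ 2 := Nat.pow_le_pow_left hkle 2
      _ = 2 ^ (2 * L) := by rw [← pow_mul]; congr 1; ring
  obtain ⟨H₀, H₁, hH₀s, hH₁s, hH₀, hH₁, hHcard⟩ := vs_hom hAvs
  have hone : 2 ^ L ≤ H₀.card ∨ 2 ^ L ≤ H₁.card := by
    by_contra hcon
    push_neg at hcon
    have hlt : H₀.card * H₁.card < 2 ^ L * 2 ^ L :=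
      Nat.mul_lt_mul'' hcon.1 hcon.2
    rw [hAcard] at hHcard
    have h2 : 2 ^ (2 * L) = 2 ^ L * 2 ^ L := by rw [two_mul, pow_add]
    omega
  refine ⟨A, hAsub, hAcard, hk2, hAvs, ?_⟩
  rcases hone with h | h
  · exact ⟨H₀, hH₀s.trans hAsub, ⟨false, hH₀⟩, le_trans hkle h⟩
  · exact ⟨H₁, hH₁s.trans hAsub, ⟨true, hH₁⟩, le_trans hkle h⟩
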